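/- arXiv:1406.3813 — 2 statements merged into one kernel-verified Lean document; each statement's English description precedes it below -/
import Mathlib

section
/- Let R be a ring with the minimum condition on right annihilators, i.e., R contains no infinite strictly descending chain of right ideals that are right annihilators of subsets of R. Then the following are equivalent: (1) R is a right ACS ring; (2) R is a right essentially Baer ring. -/
namespace CSRickartPaper

section Defs

variable {R : Type*} [Ring R] {M : Type*} [AddCommGroup M] [Module R M]

/-- `N` is an essential submodule of `P` (inside the ambient module `M`):
`N ≤ P` and every submodule of `P` intersecting `N` trivially is zero. -/
def EssentialIn (N P : Submodule R M) : Prop :=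
  N ≤ P ∧ ∀ K : Submodule R M, K ≤ P → N ⊓ K = ⊥ → K = ⊥

/-- `N` is a small (superfluous) submodule of `P`. -/
def SmallIn (N P : Submodule R M) : Prop :=
  N ≤ P ∧ ∀ K : Submodule R M, K ≤ P → N ⊔ K = P → K = P

/-- `N` is a direct summand of `M`. -/
def IsDirectSummand (N : Submodule R M) : Prop :=
  ∃ K : Submodule R M, IsCompl N K

/-- `N` lies above the direct summand `D` of `M`: `M = D ⊕ K`, `D ≤ N` and
`N ⊓ K` is small in `K`. -/
def LiesAbove (N D : Submodule R M) : Prop :=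
  ∃ K : Submodule R M, IsCompl D K ∧ D ≤ N ∧ SmallIn (N ⊓ K) K

/-- `N` lies above a direct summand of `M`. -/
def LiesAboveSummand (N : Submodule R M) : Prop :=
  ∃ D : Submodule R M, LiesAbove N D

end Defs

section ModuleDefs

variable (R : Type*) [Ring R] (M : Type*) [AddCommGroup M] [Module R M]

/-- `M` is a CS-Rickart module: the kernel of every endomorphism is essential
in a direct summand `eM`, `e` an idempotent endomorphism. -/
def IsCSRickart : Prop :=
  ∀ φ : Module.End R M, ∃ e : Module.End R M, IsIdempotentElem e ∧
    EssentialIn (LinearMap.ker φ) (LinearMap.range e)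

/-- `M` is a d-CS-Rickart module: the image of every endomorphism lies above a
direct summand of `M`. -/
def IsDCSRickart : Prop :=
  ∀ φ : Module.End R M, LiesAboveSummand (LinearMap.range φ)

/-- `M` is a Rickart module. -/
def IsRickart : Prop :=
  ∀ φ : Module.End R M, ∃ e : Module.End R M, IsIdempotentElem e ∧
    LinearMap.ker φ = LinearMap.range e

/-- `M` is a dual Rickart module. -/
def IsDRickart : Prop :=
  ∀ φ : Module.End R M, ∃ e : Module.End R M, IsIdempotentElem e ∧
    LinearMap.range φ = LinearMap.range e

/-- `M` is a CS (extending) module. -/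
def IsCSModule : Prop :=
  ∀ N : Submodule R M, ∃ D : Submodule R M, IsDirectSummand D ∧ EssentialIn N D

/-- `M` is a lifting (d-CS) module. -/
def IsLifting : Prop :=
  ∀ N : Submodule R M, LiesAboveSummand N

/-- `M` is a singular module: the annihilator of every element is an essential
ideal of `R`. -/
def IsSingularModule : Prop :=
  ∀ m : M, EssentialIn (LinearMap.ker (LinearMap.toSpanSingleton R M m)) (⊤ : Submodule R R)

/-- `M` is uniform: every nonzero submodule is essential. -/
def IsUniformModule : Prop :=
  ∀ N : Submodule R M, N ≠ ⊥ → EssentialIn N (⊤ : Submodule R M)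

/-- `M` satisfies the C₂ condition: every submodule isomorphic to a direct
summand is itself a direct summand. -/
def IsC2 : Prop :=
  ∀ N D : Submodule R M, IsDirectSummand D → Nonempty (N ≃ₗ[R] D) → IsDirectSummand N

/-- `M` is K-nonsingular. -/
def IsKNonsingular : Prop :=
  ∀ φ : Module.End R M, ∀ N : Submodule R M, EssentialIn N (⊤ : Submodule R M) →
    N ≤ LinearMap.ker φ → φ = 0

/-- `M` is T-noncosingular. -/
def IsTNoncosingular : Prop :=
  ∀ φ : Module.End R M, φ ≠ 0 → ¬ SmallIn (LinearMap.range φ) (⊤ : Submodule R M)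

/-- `M` is an SIP-CS module. -/
def IsSIPCS : Prop :=
  ∀ A B : Submodule R M, IsDirectSummand A → IsDirectSummand B →
    ∃ D : Submodule R M, IsDirectSummand D ∧ EssentialIn (A ⊓ B) D

/-- `M` is an SSP-d-CS module. -/
def IsSSPdCS : Prop :=
  ∀ A B : Submodule R M, IsDirectSummand A → IsDirectSummand B →
    LiesAboveSummand (A ⊔ B)

end ModuleDefs

section RelDefs

variable (R : Type*) [Ring R] (M N : Type*) [AddCommGroup M] [Module R M]
  [AddCommGroup N] [Module R N]

/-- `M` is relatively CS-Rickart to `N`. -/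
def IsRelCSRickart : Prop :=
  ∀ φ : M →ₗ[R] N, ∃ e : Module.End R M, IsIdempotentElem e ∧
    EssentialIn (LinearMap.ker φ) (LinearMap.range e)

/-- `M` is relatively d-CS-Rickart to `N`. -/
def IsRelDCSRickart : Prop :=
  ∀ φ : M →ₗ[R] N, LiesAboveSummand (LinearMap.range φ)

/-- `N` is `M`-injective. -/
def IsRelInjective : Prop :=
  ∀ (A : Submodule R M) (f : A →ₗ[R] N), ∃ g : M →ₗ[R] N, ∀ a : A, g a = f a

end RelDefs

section RingDefs

variable (R : Type*) [Ring R]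

/-- The annihilator of an element `a` of `R`, as an ideal (kernel of `r ↦ r • a`). -/
def annElem (a : R) : Submodule R R :=
  LinearMap.ker (LinearMap.toSpanSingleton R R a)

/-- The annihilator of a subset `X` of `R`. -/
def annSet (X : Set R) : Submodule R R :=
  ⨅ x ∈ X, annElem R x

/-- The principal ideal generated by `e`, i.e. the image of `r ↦ r • e`. -/
def idealGen (e : R) : Submodule R R :=
  LinearMap.range (LinearMap.toSpanSingleton R R e)

/-- `R` is an ACS ring: the annihilator of every element is essential in a
direct summand `eR` of `R`. -/
def IsACSRing : Prop :=
  ∀ a : R, ∃ e : R, IsIdempotentElem e ∧ EssentialIn (annElem R a) (idealGen R e)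

/-- `R` is an essentially Baer ring. -/
def IsEssentiallyBaer : Prop :=
  ∀ X : Set R, X.Nonempty → ∃ e : R, IsIdempotentElem e ∧
    EssentialIn (annSet R X) (idealGen R e)

/-- The Jacobson radical of the ring `R`. -/
noncomputable def jacRad : Ideal R := Ideal.jacobson (⊥ : Ideal R)

/-- `R` is semiregular: `R/J(R)` is von Neumann regular and idempotents lift
modulo `J(R)` (stated elementwise). -/
def IsSemiregularRing : Prop :=
  (∀ a : R, ∃ b : R, a - a * b * a ∈ jacRad R) ∧
  (∀ a : R, a - a * a ∈ jacRad R →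
    ∃ e : R, IsIdempotentElem e ∧ e - a ∈ jacRad R)

/-- `J(R)` coincides with the singular ideal `Z(R)`. -/
def JacEqSingular : Prop :=
  ∀ a : R, a ∈ jacRad R ↔ EssentialIn (annElem R a) (⊤ : Submodule R R)

end RingDefs

section GenDefs

variable {R : Type*} [Ring R] {M : Type*} [AddCommGroup M] [Module R M]

/-- A submodule is `n`-generated if it is spanned by at most `n` elements. -/
def NGen (n : ℕ) (N : Submodule R M) : Prop :=
  ∃ f : Fin n → M, Submodule.span R (Set.range f) = N

end GenDefs

end CSRickartPaper


/-!
An annihilator essential in a summand `Re` stays so after intersecting with one more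
annihilator `ℓ(a)`: if `ℓ(ea)` is essential in `Rf`, then `Re ∩ ℓ(a) = Re ∩ ℓ(ea)` is essential in
`Re ∩ Rf`, and `1 - e ∈ ℓ(ea) ≤ Rf` forces `fef = fe`, whence `Re ∩ Rf = R(fe)` with `fe`
idempotent. So in an ACS ring the annihilators of finite nonempty sets are essential in summands.
The minimum condition makes the annihilator of any nonempty set equal to that of a finite subset,
namely one whose annihilator is minimal among those of finite subsets.
-/

namespace CSRickartPaper

section Annihilators

variable {R : Type*} [Ring R]

lemma mem_annElem {a r : R} : r ∈ annElem R a ↔ r * a = 0 := by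
  simp [annElem, LinearMap.toSpanSingleton_apply]

lemma mem_annSet {X : Set R} {r : R} : r ∈ annSet R X ↔ ∀ x ∈ X, r * x = 0 := by
  simp [annSet, Submodule.mem_iInf, mem_annElem]

lemma mem_idealGen {e x : R} (he : IsIdempotentElem e) : x ∈ idealGen R e ↔ x * e = x := by
  constructor
  · rintro ⟨r, rfl⟩
    simp only [LinearMap.toSpanSingleton_apply, smul_eq_mul, mul_assoc, he.eq]
  · exact fun h => ⟨x, by simp [LinearMap.toSpanSingleton_apply, h]⟩

lemma annSet_singleton (a : R) : annSet R {a} = annElem R a := by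
  ext r
  simp [mem_annSet, mem_annElem]

lemma annSet_insert (a : R) (X : Set R) :
    annSet R (insert a X) = annElem R a ⊓ annSet R X := by
  ext r
  simp [mem_annSet, mem_annElem, Submodule.mem_inf]

lemma annSet_anti {X Y : Set R} (h : X ⊆ Y) : annSet R Y ≤ annSet R X := fun _ hr =>
  mem_annSet.2 fun x hx => mem_annSet.1 hr x (h hx)

end Annihilators

section Essential

variable {R : Type*} [Ring R] {M : Type*} [AddCommGroup M] [Module R M]

lemma EssentialIn.trans {N P Q : Submodule R M} (hNP : EssentialIn N P) (hPQ : EssentialIn P Q) :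
    EssentialIn N Q := by
  refine ⟨hNP.1.trans hPQ.1, fun K hKQ hNK => hPQ.2 K hKQ ?_⟩
  refine hNP.2 (P ⊓ K) inf_le_left (eq_bot_iff.2 ?_)
  calc N ⊓ (P ⊓ K) ≤ N ⊓ K := inf_le_inf_left N inf_le_right
    _ = ⊥ := hNK

lemma EssentialIn.inf_right {N P : Submodule R M} (h : EssentialIn N P) (T : Submodule R M) :
    EssentialIn (N ⊓ T) (P ⊓ T) := by
  refine ⟨inf_le_inf_right T h.1, fun K hK hNTK => h.2 K (hK.trans inf_le_left) (eq_bot_iff.2 ?_)⟩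
  calc N ⊓ K ≤ N ⊓ T ⊓ K :=
        le_inf (le_inf inf_le_left (inf_le_right.trans (hK.trans inf_le_right))) inf_le_right
    _ = ⊥ := hNTK

end Essential

section EssentialInSummand

variable {R : Type*} [Ring R]

def IsEssentialInSummand (N : Submodule R R) : Prop :=
  ∃ e : R, IsIdempotentElem e ∧ EssentialIn N (idealGen R e)

lemma idealGen_inf_idealGen_of_mul_mul_eq {e f : R} (he : IsIdempotentElem e)
    (hf : IsIdempotentElem f) (hfef : f * e * f = f * e) :
    IsIdempotentElem (f * e) ∧ idealGen R e ⊓ idealGen R f = idealGen R (f * e) := by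
  have hfe : IsIdempotentElem (f * e) := by
    calc f * e * (f * e) = f * e * f * e := by rw [mul_assoc (f * e)]
      _ = f * e := by rw [hfef, mul_assoc, he.eq]
  refine ⟨hfe, le_antisymm ?_ ?_⟩
  · rintro x ⟨hxe, hxf⟩
    rw [mem_idealGen hfe, ← mul_assoc, (mem_idealGen hf).1 hxf, (mem_idealGen he).1 hxe]
  · intro x hx
    have hx : x * (f * e) = x := (mem_idealGen hfe).1 hx
    refine ⟨(mem_idealGen he).2 ?_, (mem_idealGen hf).2 ?_⟩
    · rw [← hx, mul_assoc, mul_assoc, he.eq]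
    · rw [← hx, mul_assoc, hfef]

lemma idealGen_inf_annElem_mul {e : R} (he : IsIdempotentElem e) (a : R) :
    idealGen R e ⊓ annElem R (e * a) = idealGen R e ⊓ annElem R a := by
  ext x
  simp only [Submodule.mem_inf, mem_idealGen he, mem_annElem, ← mul_assoc]
  constructor <;> rintro ⟨hxe, hx⟩ <;> simp_all

lemma IsACSRing.isEssentialInSummand_idealGen_inf_annElem (hacs : IsACSRing R) {e : R}
    (he : IsIdempotentElem e) (a : R) : IsEssentialInSummand (idealGen R e ⊓ annElem R a) := by
  obtain ⟨f, hf, hess⟩ := hacs (e * a)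
  have h1e : (1 - e) * f = 1 - e :=
    (mem_idealGen hf).1 <| hess.1 <| mem_annElem.2 <| by
      rw [← mul_assoc, sub_mul, one_mul, he.eq, sub_self, zero_mul]
  have hfef : f * e * f = f * e := by
    have hef : e * f = f - 1 + e := by
      rw [sub_mul, one_mul] at h1e
      rw [← sub_sub_cancel f (e * f), h1e]
      abel
    rw [mul_assoc, hef, mul_add, mul_sub, hf.eq, mul_one, sub_self, zero_add]
  obtain ⟨hfe, hinf⟩ := idealGen_inf_idealGen_of_mul_mul_eq he hf hfef
  refine ⟨f * e, hfe, ?_⟩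
  rw [← idealGen_inf_annElem_mul he, inf_comm, ← hinf, inf_comm (idealGen R e)]
  exact hess.inf_right _

lemma IsEssentialInSummand.inf_annElem (hacs : IsACSRing R) {N : Submodule R R}
    (hN : IsEssentialInSummand N) (a : R) : IsEssentialInSummand (N ⊓ annElem R a) := by
  obtain ⟨e, he, hNe⟩ := hN
  obtain ⟨g, hg, heg⟩ := hacs.isEssentialInSummand_idealGen_inf_annElem he a
  exact ⟨g, hg, (hNe.inf_right _).trans heg⟩

lemma IsACSRing.isEssentialInSummand_annSet_finset (hacs : IsACSRing R) {s : Finset R}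
    (hs : s.Nonempty) : IsEssentialInSummand (annSet R s) := by
  induction hs using Finset.Nonempty.cons_induction with
  | singleton a =>
    rw [Finset.coe_singleton, annSet_singleton]
    exact hacs a
  | cons a s _ _ ih =>
    rw [Finset.coe_cons, annSet_insert, inf_comm]
    exact ih.inf_annElem hacs a

end EssentialInSummand

lemma exists_finset_annSet_eq {R : Type*} [Ring R]
    (hmin : ¬ ∃ f : ℕ → Set R, ∀ k : ℕ, annSet R (f (k + 1)) < annSet R (f k))
    {X : Set R} (hX : X.Nonempty) :
    ∃ s : Finset R, s.Nonempty ∧ annSet R s = annSet R X := by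
  classical
  have hwf : WellFounded fun s t : Finset R => annSet R s < annSet R t :=
    wellFounded_iff_isEmpty_descending_chain.2 ⟨fun ⟨f, hf⟩ => hmin ⟨fun k => f k, hf⟩⟩
  obtain ⟨x₀, hx₀⟩ := hX
  obtain ⟨s, ⟨hsX, hs⟩, hmins⟩ := hwf.has_min {s : Finset R | ↑s ⊆ X ∧ s.Nonempty}
    ⟨{x₀}, by simpa using hx₀, Finset.singleton_nonempty x₀⟩
  refine ⟨s, hs, le_antisymm (fun r hr => mem_annSet.2 fun x hx => ?_) (annSet_anti hsX)⟩
  have hins : annSet R ↑(insert x s) = annSet R s := by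
    refine (annSet_anti (Finset.subset_insert x s)).eq_of_not_lt (hmins _ ⟨?_, ?_⟩)
    · simpa [Set.insert_subset_iff] using ⟨hx, hsX⟩
    · exact Finset.insert_nonempty x s
  exact mem_annSet.1 (hins ▸ hr) x (by simp)

/-- For a ring with the minimum condition on annihilators, the ACS property and
the essentially Baer property coincide. -/
theorem acs_iff_essentiallyBaer_of_minCondition
    {R : Type*} [Ring R]
    (hmin : ¬ ∃ f : ℕ → Set R, ∀ k : ℕ, annSet R (f (k + 1)) < annSet R (f k)) :
    IsACSRing R ↔ IsEssentiallyBaer R := by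
  refine ⟨fun hacs X hX => ?_, fun hEB a => ?_⟩
  · obtain ⟨s, hs, hsX⟩ := exists_finset_annSet_eq hmin hX
    rw [← hsX]
    exact hacs.isEssentialInSummand_annSet_finset hs
  · simpa [annSet_singleton] using hEB {a} (Set.singleton_nonempty a)

end CSRickartPaper
end

section
/- Let P be a projective right R-module, N a right R-module, and φ : P → N a homomorphism. Then the following are equivalent: (1) ker φ is essential in eP for some idempotent e ∈ End(P); (2) φ(P) = P₀ ⊕ S, where P₀ is a projective module and S is a singular module. -/
namespace CSRickartPaper

/-! If `ker φ` is essential in the summand `eP`, then `φ` is injective on the complement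
`(1 - e)P`, so its image there is projective, while `φ(eP)` is singular: the annihilator of
`φ p` contains the preimage of `ker φ` under `r ↦ r • p`, which is essential.

Conversely, if `φ(P) = P₀ ⊕ S`, then `φ⁻¹(S)` is the kernel of `P → N ⧸ S`, whose image is
isomorphic to `P₀`; this map splits, so `φ⁻¹(S)` is a projective direct summand of `P`, and
`ker φ` is essential in it by Sandomierski's lemma: a map from a projective module to a
singular module has essential kernel. For a free module this holds because a nonzero element
involves only finitely many coordinates, and the condition that these coordinates lie in the
annihilators of the images of the basis vectors cuts out a finite intersection of essential
submodules. -/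

open LinearMap Submodule

section Essential

variable {R : Type*} [Ring R] {M M' : Type*} [AddCommGroup M] [Module R M]
  [AddCommGroup M'] [Module R M']

theorem essentialIn_iff {N Q : Submodule R M} :
    EssentialIn N Q ↔
      N ≤ Q ∧ ∀ x ∈ Q, x ≠ 0 → ∃ r : R, r • x ∈ N ∧ r • x ≠ 0 := by
  refine and_congr_right fun _ ↦ ⟨fun h x hxQ hx ↦ ?_, fun h K hKQ hNK ↦ ?_⟩
  · by_contra! hN
    refine hx (span_singleton_eq_bot.mp (h _ (span_singleton_le_iff_mem _ _ |>.mpr hxQ) ?_))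
    rw [eq_bot_iff]
    rintro _ ⟨hyN, hy⟩
    obtain ⟨r, rfl⟩ := mem_span_singleton.mp hy
    exact hN r hyN
  · rw [eq_bot_iff]
    intro x hxK
    by_contra hx
    obtain ⟨r, hrN, hr⟩ := h x (hKQ hxK) hx
    exact hr (by simpa [hNK] using mem_inf.mpr ⟨hrN, K.smul_mem r hxK⟩)

theorem essentialIn_top_iff {N : Submodule R M} :
    EssentialIn N ⊤ ↔ ∀ x : M, x ≠ 0 → ∃ r : R, r • x ∈ N ∧ r • x ≠ 0 := by
  simp [essentialIn_iff]

theorem essentialIn_iff_essentialIn_comap_subtype {N Q : Submodule R M} (hNQ : N ≤ Q) :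
    EssentialIn N Q ↔ EssentialIn (N.comap Q.subtype) ⊤ := by
  simp [essentialIn_iff, hNQ]

theorem EssentialIn.mono {N N' Q : Submodule R M} (h : EssentialIn N Q) (hN : N ≤ N')
    (hN' : N' ≤ Q) : EssentialIn N' Q :=
  ⟨hN', fun K hKQ hK ↦ h.2 K hKQ (eq_bot_iff.mpr (hK ▸ inf_le_inf_right K hN))⟩

theorem EssentialIn.comap {N : Submodule R M} (h : EssentialIn N ⊤) (f : M' →ₗ[R] M) :
    EssentialIn (N.comap f) ⊤ := by
  rw [essentialIn_top_iff] at h ⊢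
  intro x hx
  by_cases hfx : f x = 0
  · exact ⟨1, by simp [hfx], by simpa using hx⟩
  · obtain ⟨r, hrN, hr⟩ := h (f x) hfx
    exact ⟨r, by simpa using hrN, fun hrx ↦ hr (by rw [← map_smul, hrx, map_zero])⟩

theorem EssentialIn.inf {N₁ N₂ : Submodule R M} (h₁ : EssentialIn N₁ ⊤)
    (h₂ : EssentialIn N₂ ⊤) : EssentialIn (N₁ ⊓ N₂) ⊤ := by
  rw [essentialIn_top_iff] at h₁ h₂ ⊢
  intro x hx
  obtain ⟨r, hrN, hr⟩ := h₁ x hx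
  obtain ⟨s, hsN, hs⟩ := h₂ (r • x) hr
  refine ⟨s * r, mem_inf.mpr ⟨?_, ?_⟩, ?_⟩ <;> rw [mul_smul]
  exacts [N₁.smul_mem s hrN, hsN, hs]

theorem essentialIn_finsetInf {ι : Type*} (s : Finset ι) {N : ι → Submodule R M}
    (h : ∀ i ∈ s, EssentialIn (N i) ⊤) : EssentialIn (s.inf N) ⊤ := by
  classical
  induction s using Finset.induction_on with
  | empty => exact ⟨le_rfl, fun K _ hK ↦ by simpa using hK⟩
  | insert i s _ ih =>
    rw [Finset.inf_insert]
    exact (h i (s.mem_insert_self i)).inf (ih fun j hj ↦ h j (Finset.mem_insert_of_mem hj))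

end Essential

section Singular

variable {R : Type*} [Ring R] {M T : Type*} [AddCommGroup M] [Module R M]
  [AddCommGroup T] [Module R T]

theorem isSingularModule_map_of_essentialIn_ker {N : Type*} [AddCommGroup N] [Module R N]
    {φ : M →ₗ[R] N} {Q : Submodule R M} (h : EssentialIn (ker φ) Q) :
    IsSingularModule R (Q.map φ) := by
  rintro ⟨_, p, hp, rfl⟩
  have hQ := (essentialIn_iff_essentialIn_comap_subtype h.1).mp h
  refine (hQ.comap (toSpanSingleton R Q ⟨p, hp⟩)).mono (fun r hr ↦ ?_) le_top
  simpa [Subtype.ext_iff] using hr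

theorem essentialIn_ker_of_finsupp {ι : Type*} (ψ : (ι →₀ R) →ₗ[R] T)
    (hT : IsSingularModule R T) : EssentialIn (ker ψ) ⊤ := by
  classical
  rw [essentialIn_top_iff]
  intro x hx
  -- `r • x ∈ E` makes every coordinate of `r • x` annihilate the image of its basis vector.
  let E : Submodule R (ι →₀ R) := x.support.inf fun i ↦
    (ker (toSpanSingleton R T (ψ (Finsupp.single i 1)))).comap (Finsupp.lapply i)
  have hE : EssentialIn E ⊤ := essentialIn_finsetInf _ fun i _ ↦ (hT _).comap _
  obtain ⟨r, hrE, hr⟩ := essentialIn_top_iff.mp hE x hx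
  refine ⟨r, ?_, hr⟩
  have hψ : ψ (r • x) = ∑ i ∈ x.support, (r • x) i • ψ (Finsupp.single i 1) := by
    conv_lhs => rw [← (r • x).sum_single]
    rw [map_finsuppSum, Finsupp.sum_of_support_subset _ Finsupp.support_smul _ (by simp)]
    exact Finset.sum_congr rfl fun i _ ↦ by rw [← Finsupp.smul_single_one, map_smul]
  rw [mem_ker, hψ]
  exact Finset.sum_eq_zero fun i hi ↦ by simpa using mem_finsetInf.mp hrE i hi

/-- Sandomierski's lemma. -/
theorem essentialIn_ker_of_projective [Module.Projective R M] (ψ : M →ₗ[R] T)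
    (hT : IsSingularModule R T) : EssentialIn (ker ψ) ⊤ := by
  obtain ⟨s, hs⟩ := Module.projective_def'.mp ‹Module.Projective R M›
  have hF := essentialIn_ker_of_finsupp (ψ ∘ₗ Finsupp.linearCombination R id) hT
  refine (hF.comap s).mono (fun x hx ↦ ?_) le_top
  simpa [← LinearMap.comp_apply, hs] using hx

theorem essentialIn_ker_comap_of_projective {N : Type*} [AddCommGroup N] [Module R N]
    {φ : M →ₗ[R] N} {S : Submodule R N} [Module.Projective R (S.comap φ)]
    (hS : IsSingularModule R S) : EssentialIn (ker φ) (S.comap φ) := by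
  have hker : ker φ ≤ S.comap φ := fun x hx ↦ by simp [mem_ker.mp hx]
  rw [essentialIn_iff_essentialIn_comap_subtype hker,
    ← ker_restrict (f := φ) (fun _ hx ↦ hx)]
  exact essentialIn_ker_of_projective _ hS

end Singular

section Summands

variable {R : Type*} [Ring R] {M N : Type*} [AddCommGroup M] [Module R M]
  [AddCommGroup N] [Module R N]

theorem disjoint_map_of_ker_le {f : M →ₗ[R] N} {C Q : Submodule R M} (h : Disjoint C Q)
    (hker : ker f ≤ Q) : Disjoint (C.map f) (Q.map f) := by
  rw [disjoint_iff, eq_bot_iff]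
  rintro _ ⟨⟨c, hc, rfl⟩, q, hq, hqc⟩
  have hcq : c - q ∈ ker f := by simp [hqc]
  have hcQ : c ∈ Q := by simpa using Q.add_mem (hker hcq) hq
  simp [disjoint_def.mp h c hc hcQ]

theorem projective_of_isCompl [Module.Projective R M] {C D : Submodule R M} (h : IsCompl C D) :
    Module.Projective R C :=
  .of_split C.subtype (C.projectionOnto D h) (by ext; simp [projectionOnto_apply_left])

theorem projective_map_of_disjoint_ker {f : M →ₗ[R] N} {C : Submodule R M}
    [Module.Projective R C] (h : Disjoint C (ker f)) : Module.Projective R (C.map f) :=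
  .of_equiv <| LinearEquiv.ofBijective (f.submoduleMap C)
    ⟨submoduleMap_injective_of_injOn (disjoint_ker_iff_injOn.mp h), f.submoduleMap_surjective C⟩

theorem exists_isIdempotentElem_range_eq_ker (f : M →ₗ[R] N)
    [Module.Projective R (range f)] :
    ∃ e : Module.End R M, IsIdempotentElem e ∧ range e = ker f := by
  obtain ⟨g, hg⟩ := f.rangeRestrict.exists_rightInverse_of_surjective f.range_rangeRestrict
  have hgf : IsIdempotentElem (g ∘ₗ f.rangeRestrict) := by
    rw [IsIdempotentElem, Module.End.mul_eq_comp, comp_assoc, ← comp_assoc _ g, hg, id_comp]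
  have hker : ker (g ∘ₗ f.rangeRestrict) = ker f := by
    rw [ker_comp_of_ker_eq_bot _ (ker_eq_bot_of_inverse hg), ker_rangeRestrict]
  refine ⟨1 - g ∘ₗ f.rangeRestrict, hgf.one_sub, ?_⟩
  rw [hgf.one_sub.range_eq_ker_one_sub, sub_sub_cancel, ← hker]

end Summands

/-- For a homomorphism `φ` from a projective module `P`, the kernel of `φ` is
essential in a direct summand `eP` iff the image of `φ` decomposes as
`P₀ ⊕ S` with `P₀` projective and `S` singular. -/
theorem ker_essential_iff_image_decomposes
    {R : Type*} [Ring R] {P N : Type*} [AddCommGroup P] [Module R P]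
    [AddCommGroup N] [Module R N]
    (hP : Module.Projective R P) (φ : P →ₗ[R] N) :
    (∃ e : Module.End R P, IsIdempotentElem e ∧
        EssentialIn (LinearMap.ker φ) (LinearMap.range e)) ↔
    (∃ P₀ S : Submodule R N, P₀ ⊓ S = ⊥ ∧ P₀ ⊔ S = LinearMap.range φ ∧
        Module.Projective R P₀ ∧ IsSingularModule R S) := by
  constructor
  · rintro ⟨e, he, hess⟩
    have hC : IsCompl (ker e) (range e) := he.isCompl.symm
    have : Module.Projective R (ker e) := projective_of_isCompl hC
    refine ⟨(ker e).map φ, (range e).map φ, ?_, ?_, ?_,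
      isSingularModule_map_of_essentialIn_ker hess⟩
    · exact disjoint_iff.mp (disjoint_map_of_ker_le hC.disjoint hess.1)
    · rw [← Submodule.map_sup, hC.sup_eq_top, Submodule.map_top]
    · exact projective_map_of_disjoint_ker (hC.disjoint.mono_right hess.1)
  · rintro ⟨P₀, S, hdisj, hsup, hP₀, hS⟩
    have hrange : range (S.mkQ ∘ₗ φ) = P₀.map S.mkQ := by
      rw [range_comp, ← hsup, Submodule.map_sup, mkQ_map_self, sup_bot_eq]
    have : Module.Projective R (range (S.mkQ ∘ₗ φ)) :=
      hrange ▸ projective_map_of_disjoint_ker (by rwa [ker_mkQ, disjoint_iff])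
    obtain ⟨e, he, hek⟩ := exists_isIdempotentElem_range_eq_ker (S.mkQ ∘ₗ φ)
    rw [ker_comp, ker_mkQ] at hek
    have : Module.Projective R (S.comap φ) := hek ▸ projective_of_isCompl he.isCompl
    exact ⟨e, he, hek ▸ essentialIn_ker_comap_of_projective hS⟩

end CSRickartPaper
end
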